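/- Let M = SM(U) be a loopless and coloopless Schubert matroid on [n] of rank r. A Delannoy path P associated to SM(U) is admissible if and only if both of the following diagonal-free Delannoy paths associated to SM(U) are admissible: the path obtained from P by replacing every diagonal step with a north step immediately followed by an east step, and the path obtained from P by replacing every diagonal step with an east step immediately followed by a north step. -/

import Mathlib

open scoped Classical

namespace GPoly

/-- A step of a Delannoy path: east `+(1,0)`, north `+(0,1)` or diagonal `+(1,1)`. -/
inductive DStep : Type
  | east : DStep
  | north : DStep
  | diag : DStep
  deriving DecidableEq

/-- Horizontal displacement of a step. -/
def DStep.dx : DStep → ℕ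
  | .east => 1
  | .north => 0
  | .diag => 1

/-- Vertical displacement of a step. -/
def DStep.dy : DStep → ℕ
  | .east => 0
  | .north => 1
  | .diag => 1

/-- Position reached after the first `k` steps of `P`, starting at the point `s`. -/
def pathPos (s : ℕ × ℕ) (P : List DStep) (k : ℕ) : ℕ × ℕ :=
  (s.1 + ((P.take k).map DStep.dx).sum, s.2 + ((P.take k).map DStep.dy).sum)

/-- The Gale order: `U ≤ B` iff the increasing enumerations satisfy `u_ℓ ≤ b_ℓ`. -/
def galeLe {α : Type*} [LinearOrder α] (U B : Finset α) : Prop :=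
  List.Forall₂ (· ≤ ·) (U.sort (· ≤ ·)) (B.sort (· ≤ ·))

/-- Bases of the Schubert matroid `SM(U)` of rank `r` on `[n] = {1, …, n}`:
all `r`-subsets `B` of `[n]` with `U ≤ B` in the Gale order. -/
noncomputable def schubertBases (n r : ℕ) (U : Finset ℕ) : Finset (Finset ℕ) :=
  (Finset.Icc 1 n).powerset.filter fun B => B.card = r ∧ galeLe U B

/-- The point `p` lies weakly below the lattice path `path(U)`. -/
def belowPath (U : Finset ℕ) (p : ℕ × ℕ) : Prop :=
  p.2 ≤ (U ∩ Finset.Icc 1 (p.1 + p.2)).card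

/-- `path(U)` traverses the vertical unit segment from `(x, y)` to `(x, y+1)`
(by its north step number `x + y + 1`). -/
def uVertSeg (U : Finset ℕ) (x y : ℕ) : Prop :=
  x + y + 1 ∈ U ∧ (U ∩ Finset.Icc 1 (x + y + 1)).card = y + 1

/-- A Delannoy path associated to `SM(U)`: starts at `(1,1)`, ends at `(n-r, r)` and
stays weakly below `path(U)`. -/
def IsDelannoy (n r : ℕ) (U : Finset ℕ) (P : List DStep) : Prop :=
  pathPos (1, 1) P P.length = (n - r, r) ∧
    ∀ k ≤ P.length, belowPath U (pathPos (1, 1) P k)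

/-- Admissible Delannoy path associated to `SM(U)`. -/
def IsAdmissible (n r : ℕ) (U : Finset ℕ) (P : List DStep) : Prop :=
  IsDelannoy n r U P ∧
    ∀ (k : ℕ) (h : k < P.length),
      (P.get ⟨k, h⟩ = DStep.north →
        pathPos (1, 1) P (k + 1) = (n - r, r) ∨
          ¬ uVertSeg U (pathPos (1, 1) P k).1 (pathPos (1, 1) P k).2) ∧
      (P.get ⟨k, h⟩ = DStep.diag →
        belowPath U ((pathPos (1, 1) P k).1, (pathPos (1, 1) P k).2 + 1) ∧
          ¬ uVertSeg U (pathPos (1, 1) P k).1 (pathPos (1, 1) P k).2)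

/-- Number of diagonal steps of a path. -/
def diagCount (P : List DStep) : ℕ := (P.filter (· = DStep.diag)).length

/-- The set of indices (0-based) of the diagonal steps of `P`. -/
def diagIndices (P : List DStep) : Finset ℕ :=
  (Finset.range P.length).filter fun k => P.getD k DStep.east = DStep.diag

/-- Replace a diagonal step by a north step followed by an east step. -/
def expandNE : DStep → List DStep
  | DStep.diag => [DStep.north, DStep.east]
  | s => [s]

/-- Replace a diagonal step by an east step followed by a north step. -/
def expandEN : DStep → List DStep
  | DStep.diag => [DStep.east, DStep.north]
  | s => [s]

/-- The full lattice path of `B_P`: an east step, a north step, then the steps of `P`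
with each diagonal step replaced by a north step immediately followed by an east step. -/
def fullPath (P : List DStep) : List DStep :=
  DStep.east :: DStep.north :: (P.map expandNE).flatten

/-- The subset of `[n]` whose `path` is the given (diagonal-free) list of steps:
the set of (1-based) positions of the north steps. -/
def northSet (L : List DStep) : Finset ℕ :=
  ((Finset.range L.length).filter fun k => L.getD k DStep.east = DStep.north).image (· + 1)

/-- The basis `B_P` associated to a Delannoy path `P`. -/
def delannoyBasis (P : List DStep) : Finset ℕ := northSet (fullPath P)

/-! ### Matroid notions for a family of bases -/

/-- `S` is independent for the basis family `ℬ`: it is contained in some basis. -/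
def famIndep (ℬ : Finset (Finset ℕ)) (S : Finset ℕ) : Prop := ∃ B ∈ ℬ, S ⊆ B

/-- `C` is a circuit for the basis family `ℬ`: a minimal dependent set. -/
def famCircuit (ℬ : Finset (Finset ℕ)) (C : Finset ℕ) : Prop :=
  ¬ famIndep ℬ C ∧ ∀ C' ⊂ C, famIndep ℬ C'

/-- The dual basis family on the ground set `E`: complements of bases. -/
noncomputable def famDual (E : Finset ℕ) (ℬ : Finset (Finset ℕ)) : Finset (Finset ℕ) :=
  ℬ.image fun B => E \ B

/-- `e ∉ B` is externally active: `e` is the smallest element of the unique circuit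
contained in `B ∪ {e}`. -/
def ExtActive (E : Finset ℕ) (ℬ : Finset (Finset ℕ)) (B : Finset ℕ) (e : ℕ) : Prop :=
  e ∈ E ∧ e ∉ B ∧
    ∃ C, C ⊆ insert e B ∧ famCircuit ℬ C ∧ e ∈ C ∧ ∀ x ∈ C, e ≤ x

/-- `i ∈ B` is internally active: `i` is the smallest element of the unique cocircuit
contained in `(E ∖ B) ∪ {i}`. -/
def IntActive (E : Finset ℕ) (ℬ : Finset (Finset ℕ)) (B : Finset ℕ) (i : ℕ) : Prop :=
  i ∈ B ∧
    ∃ C, C ⊆ insert i (E \ B) ∧ famCircuit (famDual E ℬ) C ∧ i ∈ C ∧ ∀ x ∈ C, i ≤ x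

/-- External activity `e(B)`. -/
noncomputable def extAct (E : Finset ℕ) (ℬ : Finset (Finset ℕ)) (B : Finset ℕ) : ℕ :=
  (E.filter (ExtActive E ℬ B)).card

/-- Internal activity `i(B)`. -/
noncomputable def intAct (E : Finset ℕ) (ℬ : Finset (Finset ℕ)) (B : Finset ℕ) : ℕ :=
  (E.filter (IntActive E ℬ B)).card

/-- The statistic `α(B)`: the number of `i ∈ B` such that `B' = (B ∖ {i}) ∪ {i+1}`
is a basis with `e(B') = e(B)` and `i(B') = i(B)`. -/
noncomputable def alphaStat (E : Finset ℕ) (ℬ : Finset (Finset ℕ)) (B : Finset ℕ) : ℕ :=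
  (B.filter fun i =>
    insert (i + 1) (B.erase i) ∈ ℬ ∧
      extAct E ℬ (insert (i + 1) (B.erase i)) = extAct E ℬ B ∧
      intAct E ℬ (insert (i + 1) (B.erase i)) = intAct E ℬ B).card

/-- The rank function determined by a family of bases. -/
noncomputable def famRank (ℬ : Finset (Finset ℕ)) (A : Finset ℕ) : ℕ :=
  ℬ.sup fun B => (A ∩ B).card

/-- The β-invariant: `β(M) = (−1)^{rk(E)} Σ_{A ⊆ E} (−1)^{|A|} rk(A)`. -/
noncomputable def betaInv (E : Finset ℕ) (ℬ : Finset (Finset ℕ)) : ℤ :=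
  (-1) ^ famRank ℬ E * ∑ A ∈ E.powerset, (-1) ^ A.card * (famRank ℬ A : ℤ)

/-- `ℬ` is the collection of bases of a matroid with ground set `E`:
it is a nonempty family of subsets of `E` satisfying the basis exchange property. -/
def IsBasisFamily (E : Finset ℕ) (ℬ : Finset (Finset ℕ)) : Prop :=
  ℬ.Nonempty ∧ (∀ B ∈ ℬ, B ⊆ E) ∧
    ∀ B₁ ∈ ℬ, ∀ B₂ ∈ ℬ, ∀ x ∈ B₁ \ B₂, ∃ y ∈ B₂ \ B₁, insert y (B₁.erase x) ∈ ℬ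

/-- Two elements lie in a common component: they are equal or in a common circuit. -/
def connRel (ℬ : Finset (Finset ℕ)) (e f : ℕ) : Prop :=
  e = f ∨ ∃ C, famCircuit ℬ C ∧ e ∈ C ∧ f ∈ C

/-- The number of connected components of the matroid with bases `ℬ` on `E`. -/
noncomputable def numComponents (E : Finset ℕ) (ℬ : Finset (Finset ℕ)) : ℕ :=
  Set.ncard {S : Set ℕ | ∃ e ∈ E, S = {f | f ∈ E ∧ Relation.EqvGen (connRel ℬ) e f}}

/-- The matroid with bases `ℬ` on ground set `E` is connected. -/
def IsConnectedFam (E : Finset ℕ) (ℬ : Finset (Finset ℕ)) : Prop :=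
  E.Nonempty ∧ ∀ e ∈ E, ∀ f ∈ E, Relation.EqvGen (connRel ℬ) e f

/-- Series-parallel matroid: isomorphic to `U_{0,1}` or `U_{1,1}`
(a single loop or a single coloop), or connected with β-invariant `1`. -/
def IsSeriesParallel (E : Finset ℕ) (ℬ : Finset (Finset ℕ)) : Prop :=
  (E.card = 1 ∧ (ℬ = {∅} ∨ ℬ = {E})) ∨ (IsConnectedFam E ℬ ∧ betaInv E ℬ = 1)

/-- The bases of the restriction of the matroid with bases `ℬ` to the set `F`:
the maximal intersections of bases with `F`. -/
noncomputable def famRestrict (ℬ : Finset (Finset ℕ)) (F : Finset ℕ) : Finset (Finset ℕ) :=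
  (ℬ.image (· ∩ F)).filter fun S => ∀ T ∈ ℬ.image (· ∩ F), S ⊆ T → S = T

/-- The matroid with bases `ℬ` on `E` is a direct sum of series-parallel matroids. -/
def IsDirectSumOfSeriesParallel (E : Finset ℕ) (ℬ : Finset (Finset ℕ)) : Prop :=
  ∃ parts : Finset (Finset ℕ),
    (↑parts : Set (Finset ℕ)).PairwiseDisjoint id ∧
    parts.sup id = E ∧
    (∀ S ∈ parts, IsSeriesParallel S (famRestrict ℬ S)) ∧
    ℬ = E.powerset.filter fun B => ∀ S ∈ parts, B ∩ S ∈ famRestrict ℬ S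

/-! ### Base polytopes -/

/-- The indicator vector of `B ⊆ E`, as a point of `ℝ^E`. -/
noncomputable def basisVector (E : Finset ℕ) (B : Finset ℕ) : ↑E → ℝ :=
  fun e => if (e : ℕ) ∈ B then 1 else 0

/-- The base polytope of the matroid with bases `ℬ` on `E`:
the convex hull in `ℝ^E` of the indicator vectors of the bases. -/
noncomputable def basePolytope (E : Finset ℕ) (ℬ : Finset (Finset ℕ)) : Set (↑E → ℝ) :=
  convexHull ℝ (basisVector E '' (↑ℬ : Set (Finset ℕ)))

/-- The indicator function `ℝ^E → ℤ` of the base polytope. -/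
noncomputable def polyInd (E : Finset ℕ) (ℬ : Finset (Finset ℕ)) : (↑E → ℝ) → ℤ :=
  fun x => if x ∈ basePolytope E ℬ then 1 else 0

/-- The indicator function `ℝ^E → ℤ` of the relative interior of the base polytope. -/
noncomputable def relintInd (E : Finset ℕ) (ℬ : Finset (Finset ℕ)) : (↑E → ℝ) → ℤ :=
  fun x => if x ∈ intrinsicInterior ℝ (basePolytope E ℬ) then 1 else 0

/-! ### Cyclic flats and the cyclic chain lattice -/

/-- `F` is a flat of the matroid with bases `ℬ` on `E`. -/
def IsFlat (E : Finset ℕ) (ℬ : Finset (Finset ℕ)) (F : Finset ℕ) : Prop :=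
  F ⊆ E ∧ ∀ e ∈ E, famRank ℬ (insert e F) = famRank ℬ F → e ∈ F

/-- `F` is a cyclic flat: a flat whose restriction has no coloops. -/
def IsCyclicFlat (E : Finset ℕ) (ℬ : Finset (Finset ℕ)) (F : Finset ℕ) : Prop :=
  IsFlat E ℬ F ∧ ∀ e ∈ F, ¬ (∀ S ∈ famRestrict ℬ F, e ∈ S)

/-- The set of cyclic flats. -/
noncomputable def cyclicFlats (E : Finset ℕ) (ℬ : Finset (Finset ℕ)) : Finset (Finset ℕ) :=
  E.powerset.filter (IsCyclicFlat E ℬ)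

/-- A chain of cyclic flats containing the minimum and maximum of the lattice of
cyclic flats; these are the elements (other than the top `1̂`) of the cyclic
chain lattice. -/
def IsCyclicChain (E : Finset ℕ) (ℬ : Finset (Finset ℕ)) (C : Finset (Finset ℕ)) : Prop :=
  ↑C ⊆ (cyclicFlats E ℬ : Set (Finset ℕ)) ∧ IsChain (· ⊆ ·) (↑C : Set (Finset ℕ)) ∧
    (∃ F ∈ C, ∀ G ∈ cyclicFlats E ℬ, F ⊆ G) ∧
    (∃ F ∈ C, ∀ G ∈ cyclicFlats E ℬ, G ⊆ F)

/-- The set of chains of cyclic flats containing the minimum and the maximum. -/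
noncomputable def cyclicChains (E : Finset ℕ) (ℬ : Finset (Finset ℕ)) :
    Finset (Finset (Finset ℕ)) :=
  (cyclicFlats E ℬ).powerset.filter (IsCyclicChain E ℬ)

/-- The rank function `A ↦ min_{Z ∈ C} (rk_M(Z) + |A ∖ Z|)` associated to a chain `C`. -/
noncomputable def chainRank (ℬ : Finset (Finset ℕ)) (C : Finset (Finset ℕ))
    (A : Finset ℕ) : ℕ :=
  if h : C.Nonempty then C.inf' h fun Z => famRank ℬ Z + (A \ Z).card else A.card

/-- The bases of the matroid on `E` with rank function `rk`:
the subsets `B ⊆ E` with `rk B = |B| = rk E`. -/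
noncomputable def basesOfRank (E : Finset ℕ) (rk : Finset ℕ → ℕ) : Finset (Finset ℕ) :=
  E.powerset.filter fun B => rk B = B.card ∧ rk B = rk E

/-- The bases of the Schubert matroid `S_C` associated to a chain `C` of cyclic flats. -/
noncomputable def chainSchubert (E : Finset ℕ) (ℬ : Finset (Finset ℕ))
    (C : Finset (Finset ℕ)) : Finset (Finset ℕ) :=
  basesOfRank E (chainRank ℬ C)

/-- The point reached by `path(S)` after `k` steps. -/
def pathPoint (S : Finset ℕ) (k : ℕ) : ℕ × ℕ :=
  (k - (S ∩ Finset.Icc 1 k).card, (S ∩ Finset.Icc 1 k).card)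

/-! Admissibility is a local condition on each step, so it is best read recursively along the
path. A diagonal step at `p` is allowed exactly when a north step at `p` would be; replacing it
by north-then-east takes that north step, which is never final since an east step follows it.
Replacing it by east-then-north is also fine: the east step to `p + (1,0)` stays below `path(U)`
because `p` does, and the north step from there does not run along `path(U)`, since `path(U)`
passes weakly above `p + (0,1)`. -/

def DStep.move (x : DStep) (p : ℕ × ℕ) : ℕ × ℕ := (p.1 + x.dx, p.2 + x.dy)

def StepAllowed (U : Finset ℕ) (t p : ℕ × ℕ) : DStep → Prop
  | .east => True
  | .north => (p.1, p.2 + 1) = t ∨ ¬ uVertSeg U p.1 p.2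
  | .diag => belowPath U (p.1, p.2 + 1) ∧ ¬ uVertSeg U p.1 p.2

def AdmissibleFrom (U : Finset ℕ) (t : ℕ × ℕ) : ℕ × ℕ → List DStep → Prop
  | p, [] => belowPath U p ∧ p = t
  | p, x :: P => belowPath U p ∧ StepAllowed U t p x ∧ AdmissibleFrom U t (x.move p) P

lemma pathPos_zero (s : ℕ × ℕ) (P : List DStep) : pathPos s P 0 = s := by
  simp [pathPos]

lemma pathPos_nil (s : ℕ × ℕ) (k : ℕ) : pathPos s [] k = s := by
  simp [pathPos]

lemma pathPos_cons_succ (s : ℕ × ℕ) (x : DStep) (P : List DStep) (k : ℕ) :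
    pathPos s (x :: P) (k + 1) = pathPos (x.move s) P k := by
  simp [pathPos, DStep.move, add_assoc]

lemma pathPos_succ (s : ℕ × ℕ) (P : List DStep) {k : ℕ} (hk : k < P.length) :
    pathPos s P (k + 1) = P[k].move (pathPos s P k) := by
  rw [pathPos, pathPos, List.take_add_one, List.getElem?_eq_getElem hk, Option.toList_some,
    List.map_append, List.map_append, List.sum_append, List.sum_append]
  simp [DStep.move, add_assoc]

lemma admissibleFrom_iff (U : Finset ℕ) (t s : ℕ × ℕ) (P : List DStep) :
    AdmissibleFrom U t s P ↔
      pathPos s P P.length = t ∧ (∀ k ≤ P.length, belowPath U (pathPos s P k)) ∧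
        ∀ k (hk : k < P.length), StepAllowed U t (pathPos s P k) P[k] := by
  induction P generalizing s with
  | nil => simp [AdmissibleFrom, pathPos_nil, and_comm]
  | cons x P ih =>
    simp only [AdmissibleFrom, ih, List.length_cons, ← Nat.lt_succ_iff, Nat.forall_lt_succ_left,
      Nat.forall_lt_succ_left', pathPos_cons_succ, pathPos_zero, List.getElem_cons_zero,
      List.getElem_cons_succ]
    tauto

lemma isAdmissible_iff_admissibleFrom (n r : ℕ) (U : Finset ℕ) (P : List DStep) :
    IsAdmissible n r U P ↔ AdmissibleFrom U (n - r, r) (1, 1) P := by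
  rw [admissibleFrom_iff, IsAdmissible, IsDelannoy, and_assoc]
  refine and_congr_right' (and_congr_right' (forall_congr' fun k => forall_congr' fun hk => ?_))
  rw [List.get_eq_getElem, pathPos_succ _ _ hk]
  cases P[k] <;> simp [StepAllowed, DStep.move, DStep.dx, DStep.dy]

lemma belowPath_east {U : Finset ℕ} {x y : ℕ} (h : belowPath U (x, y)) :
    belowPath U (x + 1, y) :=
  h.trans (Finset.card_le_card (Finset.inter_subset_inter_left (Finset.Icc_subset_Icc_right
    (by omega))))

lemma not_uVertSeg_of_belowPath {U : Finset ℕ} {x y : ℕ} (h : belowPath U (x, y + 1)) :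
    ¬ uVertSeg U (x + 1) y := by
  rintro ⟨hmem, hcard⟩
  have hlt : (U ∩ Finset.Icc 1 (x + (y + 1))).card < (U ∩ Finset.Icc 1 (x + 1 + y + 1)).card :=
    Finset.card_lt_card <| Finset.ssubset_iff_of_subset
      (Finset.inter_subset_inter_left (Finset.Icc_subset_Icc_right (by omega))) |>.2
      ⟨x + 1 + y + 1, by simp [hmem], by simp; omega⟩
  dsimp only [belowPath] at h
  omega

section AdmissibleFrom

variable {U : Finset ℕ} {t p : ℕ × ℕ} {P : List DStep}

lemma AdmissibleFrom.fst_le (h : AdmissibleFrom U t p P) : p.1 ≤ t.1 := by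
  induction P generalizing p with
  | nil => exact h.2 ▸ le_rfl
  | cons x P ih => exact (Nat.le_add_right _ _).trans (ih h.2.2)

lemma AdmissibleFrom.flatten_expandNE (h : AdmissibleFrom U t p P) :
    AdmissibleFrom U t p (P.map expandNE).flatten := by
  induction P generalizing p with
  | nil => exact h
  | cons x P ih =>
    obtain ⟨hp, hx, hP⟩ := h
    cases x with
    | east => exact ⟨hp, hx, ih hP⟩
    | north => exact ⟨hp, hx, ih hP⟩
    | diag => exact ⟨hp, Or.inr hx.2, hx.1, trivial, ih hP⟩

lemma AdmissibleFrom.flatten_expandEN (h : AdmissibleFrom U t p P) :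
    AdmissibleFrom U t p (P.map expandEN).flatten := by
  induction P generalizing p with
  | nil => exact h
  | cons x P ih =>
    obtain ⟨hp, hx, hP⟩ := h
    cases x with
    | east => exact ⟨hp, hx, ih hP⟩
    | north => exact ⟨hp, hx, ih hP⟩
    | diag =>
      exact ⟨hp, trivial, belowPath_east hp, Or.inr (not_uVertSeg_of_belowPath hx.1), ih hP⟩

lemma AdmissibleFrom.of_flatten_expandNE (h : AdmissibleFrom U t p (P.map expandNE).flatten) :
    AdmissibleFrom U t p P := by
  induction P generalizing p with
  | nil => exact h
  | cons x P ih =>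
    cases x with
    | east => exact ⟨h.1, h.2.1, ih h.2.2⟩
    | north => exact ⟨h.1, h.2.1, ih h.2.2⟩
    | diag =>
      obtain ⟨hp, hnorth, hp', -, hP⟩ := h
      refine ⟨hp, ⟨hp', hnorth.resolve_left fun hend => ?_⟩, ih hP⟩
      have := hP.fst_le
      simp [DStep.move, DStep.dx, ← hend] at this

end AdmissibleFrom

theorem statement4_general (n r : ℕ) (U : Finset ℕ) (P : List DStep) :
    IsAdmissible n r U P ↔
      (IsAdmissible n r U ((P.map expandNE).flatten) ∧
       IsAdmissible n r U ((P.map expandEN).flatten)) := by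
  simp only [isAdmissible_iff_admissibleFrom]
  exact ⟨fun h => ⟨h.flatten_expandNE, h.flatten_expandEN⟩, fun h => h.1.of_flatten_expandNE⟩

/-- Let `SM(U)` be a loopless and coloopless Schubert matroid on `[n]`
of rank `r`. A Delannoy path `P` associated to `SM(U)` is admissible if and only if both
diagonal-free Delannoy paths obtained from `P` by replacing every diagonal step with a
north step immediately followed by an east step, respectively with an east step
immediately followed by a north step, are admissible. -/
theorem statement4 (n r : ℕ) (U : Finset ℕ) (hUsub : U ⊆ Finset.Icc 1 n)
    (hUcard : U.card = r)
    (hloopless : ∀ e ∈ Finset.Icc 1 n, ∃ B ∈ schubertBases n r U, e ∈ B)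
    (hcoloopless : ∀ e ∈ Finset.Icc 1 n, ∃ B ∈ schubertBases n r U, e ∉ B)
    (P : List DStep) (hP : IsDelannoy n r U P) :
    IsAdmissible n r U P ↔
      (IsAdmissible n r U ((P.map expandNE).flatten) ∧
       IsAdmissible n r U ((P.map expandEN).flatten)) :=
  statement4_general n r U P
end GPoly
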